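/- The sequence m_{n−i}^{1/2} = α√2·(n(n+1)⋯(n+i−1)/((n−1)(n−2)⋯(n−i)))^{1/2} for i = 1,…,n−1 satisfies the three-term recurrence m_{i−1}^{1/2} = (2n·m_i^{1/2} − √(i(2n−i−1))·m_{i+1}^{1/2})/√((i−1)(2n−i)) arising from the interior equations of B(n)u = (k_1 m_1^{−1/2}, 0, …, 0)ᵀ with m_n^{1/2} = α. -/

import Mathlib

/-! The three-term recurrence follows from the first-order relation
`√(2n-j-1) m_{j+1}^{1/2} = √j m_j^{1/2}` between consecutive terms, read off from the factorials:
applying it at `i - 1` and at `i` turns both sides of the recurrence, multiplied by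
`√((i-1)(2n-i))`, into `(2n - i) m_i^{1/2}`. -/

/-- The square roots of the masses:
`m_{n-i}^{1/2} = α√2 (n(n+1)⋯(n+i-1) / ((n-1)(n-2)⋯(n-i)))^{1/2}`, i.e. in terms of
`j = n - i`, `m_j^{1/2} = α√2 √((2n-j-1)! (j-1)! / ((n-1)!)²)` for `j < n`, and
`m_n^{1/2} = α`. -/
noncomputable def massSqrt (n : ℕ) (α : ℝ) (j : ℕ) : ℝ :=
  if j = n then α
  else α * Real.sqrt 2 *
    Real.sqrt ((Nat.factorial (2 * n - j - 1)) * (Nat.factorial (j - 1))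
      / ((Nat.factorial (n - 1)) : ℝ) ^ 2)

open Real

lemma sqrt_mul_massSqrt_succ {n j : ℕ} (α : ℝ) (hj : 1 ≤ j) (hjn : j + 1 < n) :
    √(2 * n - j - 1 : ℝ) * massSqrt n α (j + 1) = √(j : ℝ) * massSqrt n α j := by
  obtain ⟨p, hp⟩ : ∃ p, 2 * n - j - 1 = p + 1 := ⟨2 * n - j - 2, by omega⟩
  obtain ⟨q, rfl⟩ : ∃ q, j = q + 1 := ⟨j - 1, by omega⟩
  have hcast : (2 * n - (q + 1 : ℕ) - 1 : ℝ) = p + 1 := by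
    have h : (2 * n : ℝ) = p + q + 3 := by exact_mod_cast (show 2 * n = p + q + 3 by omega)
    push_cast; linarith
  rw [massSqrt, massSqrt, if_neg (by omega), if_neg (by omega), hp, hcast,
    show 2 * n - (q + 1 + 1) - 1 = p by omega, Nat.add_sub_cancel, Nat.add_sub_cancel,
    Nat.factorial_succ, Nat.factorial_succ]
  push_cast
  set c : ℝ := ((n - 1).factorial : ℝ) ^ 2
  have hswap : ∀ a b : ℝ, 0 ≤ a → 0 ≤ b →
      √a * (α * √2 * √(p.factorial * (b * q.factorial) / c)) =
        √b * (α * √2 * √(a * p.factorial * q.factorial / c)) := by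
    intro a b ha hb
    rw [show p.factorial * (b * q.factorial) / c = b * (p.factorial * q.factorial / c) by ring,
      show a * p.factorial * q.factorial / c = a * (p.factorial * q.factorial / c) by ring,
      sqrt_mul hb, sqrt_mul ha]
    ring
  exact hswap _ _ (by positivity) (by positivity)

theorem stmt_18_general (n : ℕ) (α : ℝ) :
    ∀ i : ℕ, 2 ≤ i → i ≤ n - 2 →
      massSqrt n α (i - 1) =
        (2 * (n : ℝ) * massSqrt n α i
            - Real.sqrt (i * (2 * n - i - 1)) * massSqrt n α (i + 1))
          / Real.sqrt ((i - 1) * (2 * n - i)) := by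
  intro i hi hin
  have hi' : (2 : ℝ) ≤ i := by exact_mod_cast hi
  have hin' : (i : ℝ) + 2 ≤ n := by exact_mod_cast (show i + 2 ≤ n by omega)
  have hprev := sqrt_mul_massSqrt_succ α (j := i - 1) (n := n) (by omega) (by omega)
  rw [Nat.sub_add_cancel (by omega), Nat.cast_sub (by omega), Nat.cast_one,
    show (2 * n - (i - 1 : ℝ) - 1) = 2 * n - i by ring] at hprev
  have hnext := sqrt_mul_massSqrt_succ α (n := n) (j := i) (by omega) (by omega)
  rw [eq_div_iff (sqrt_pos.2 (mul_pos (by linarith) (by linarith))).ne']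
  calc massSqrt n α (i - 1) * √((i - 1) * (2 * n - i))
      = √(2 * n - i) * (√(i - 1) * massSqrt n α (i - 1)) := by
        rw [sqrt_mul (by linarith)]; ring
    _ = (2 * n - i) * massSqrt n α i := by
        rw [← hprev, ← mul_assoc, mul_self_sqrt (by linarith)]
    _ = 2 * n * massSqrt n α i - √i * (√i * massSqrt n α i) := by
        rw [← mul_assoc, mul_self_sqrt (by linarith)]; ring
    _ = _ := by rw [← hnext, sqrt_mul (by linarith)]; ring

/-- The interior equations of `B(n)u = (k₁m₁^{-1/2}, 0, …, 0)ᵀ` give the three-term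
recurrence `m_{i-1}^{1/2} = (2n m_i^{1/2} - √(i(2n-i-1)) m_{i+1}^{1/2}) / √((i-1)(2n-i))`
for `i = 2, …, n-2`, which the closed-form sequence satisfies. -/
theorem stmt_18 (n : ℕ) (hn : 3 ≤ n) (α : ℝ) (hα : 0 < α) :
    ∀ i : ℕ, 2 ≤ i → i ≤ n - 2 →
      massSqrt n α (i - 1) =
        (2 * (n : ℝ) * massSqrt n α i
            - Real.sqrt (i * (2 * n - i - 1)) * massSqrt n α (i + 1))
          / Real.sqrt ((i - 1) * (2 * n - i)) :=
  stmt_18_general n α
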